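/- arXiv:2309.07774 — 3 statements merged into one kernel-verified Lean document; each statement's English description precedes it below -/
import Mathlib

section
/- In the IOTA DAG model, suppose the bottleneck event ℬ_i = {L(t_i) ≤ b} ∩ A_i ∩ B_i ∩ C_i occurs. Let V_i⁻ := V(t_i + κ_B) and V_i⁺ := {v ∈ ℕ : v > t_i + κ_C}. Then for every v⁻ ∈ V_i⁻ and every v⁺ ∈ V_i⁺ there exists a directed path from v⁺ to v⁻ in the limiting graph ∪_t G(t). -/
/- ## Deterministic core of the IOTA DAG model.

Time is discrete, `t_n = n`.  A realization of the model is described by four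
sequences `θ e x y : ℕ → ℕ`: vertex `n ≥ 1` arrives at time `n`, has POW
duration `θ n`, observation delay `e n`, and parents `x n`, `y n`
(selected among the tips of the graph at time `n - e n`, truncated subtraction
encoding the convention `G(t) = G(t₀)` for `t < 0`).  The vertex `n` and the
directed edges `(n, x n)`, `(n, y n)` are added to the DAG at time `n + θ n`,
i.e. they are present in `G(m)` exactly when `n + θ n < m`. -/

namespace IotaDAG

/-- `V θ n`: set of vertices of the DAG at time `n` (completed POW). -/
def V (θ : ℕ → ℕ) (n : ℕ) : Set ℕ := {0} ∪ {k | 1 ≤ k ∧ k + θ k < n}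

/-- `E θ x y n`: set of (solid) directed edges of the DAG at time `n`. -/
def E (θ x y : ℕ → ℕ) (n : ℕ) : Set (ℕ × ℕ) :=
  {p | ∃ k, 1 ≤ k ∧ k + θ k < n ∧ (p = (k, x k) ∨ p = (k, y k))}

/-- `V' θ n`: set of arrived vertices whose POW is unfinished at time `n`. -/
def V' (θ : ℕ → ℕ) (n : ℕ) : Set ℕ := {k | 1 ≤ k ∧ k < n ∧ n ≤ k + θ k}

/-- Tips at time `n`: vertices of in-degree 0. -/
def tips (θ x y : ℕ → ℕ) (n : ℕ) : Set ℕ :=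
  {v | v ∈ V θ n ∧ ∀ i, (i, v) ∉ E θ x y n}

/-- Pending tips at time `n`: tips already selected as a parent by some arrived
vertex whose POW is unfinished. -/
def pend (θ x y : ℕ → ℕ) (n : ℕ) : Set ℕ :=
  {v | v ∈ tips θ x y n ∧ ∃ j ∈ V' θ n, x j = v ∨ y j = v}

/-- Free tips at time `n`: tips that are not pending. -/
def free (θ x y : ℕ → ℕ) (n : ℕ) : Set ℕ := tips θ x y n \ pend θ x y n

/-- `L(t_n)`: number of tips. -/
noncomputable def L (θ x y : ℕ → ℕ) (n : ℕ) : ℕ := (tips θ x y n).ncard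

/-- `W(t_n)`: number of pending tips. -/
noncomputable def W (θ x y : ℕ → ℕ) (n : ℕ) : ℕ := (pend θ x y n).ncard

/-- `F(t_n)`: number of free tips. -/
noncomputable def F (θ x y : ℕ → ℕ) (n : ℕ) : ℕ := (free θ x y n).ncard

/-- Validity of a realization: every arriving vertex selects both of its parents
among the tips of the graph observed with its delay. -/
def Valid (θ e x y : ℕ → ℕ) : Prop :=
  ∀ n, 1 ≤ n → x n ∈ tips θ x y (n - e n) ∧ y n ∈ tips θ x y (n - e n)

/-- Directed edge relation of the limiting graph `⋃ₜ G(t)`. -/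
def edgeRel (x y : ℕ → ℕ) (a b : ℕ) : Prop := 1 ≤ a ∧ (x a = b ∨ y a = b)

/-- `Reach x y w u`: `u` is reachable from `w`, i.e. there is a directed path
from `w` to `u` in the limiting graph `⋃ₜ G(t)`. -/
def Reach (x y : ℕ → ℕ) (w u : ℕ) : Prop := Relation.ReflTransGen (edgeRel x y) w u

end IotaDAG
namespace IotaDAG

/- ## The bottleneck construction (Steps A, B, C). -/

/-- Step-A (tidying) event for a realization: every vertex `j` arriving at a time in
`[i, i + κA)` has delay `εmin`, POW duration `hM`, selects a single parent
(`x j = y j`) which lies outside the current free tips whenever possible. -/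
def StepA (θ e x y : ℕ → ℕ) (hM εmin κA i : ℕ) : Prop :=
  ∀ j, 1 ≤ j → i ≤ j → j < i + κA →
    e j = εmin ∧ θ j = hM ∧ x j = y j ∧
    (¬ tips θ x y (j - εmin) ⊆ free θ x y j →
        x j ∈ tips θ x y (j - εmin) \ free θ x y j) ∧
    (tips θ x y (j - εmin) ⊆ free θ x y j → x j ∈ tips θ x y (j - εmin))

/-- `FB`: the set consisting of the `2 (hM + εmin)` smallest elements of the set of
free tips at time `i + κA`. -/
def FB (θ x y : ℕ → ℕ) (hM εmin κA i : ℕ) : Set ℕ :=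
  {v | v ∈ free θ x y (i + κA) ∧
        (free θ x y (i + κA) ∩ Set.Iic v).ncard ≤ 2 * (hM + εmin)}

/-- Step-B (preparation) event: every vertex `j` arriving at a time in
`[i + κA, i + κB)` has POW duration `hM`, delay `εmin`, and selects a single parent
among the tips it observes, avoiding the reserved set `FB`. -/
def StepB (θ e x y : ℕ → ℕ) (hM εmin κA κB i : ℕ) : Prop :=
  ∀ j, 1 ≤ j → i + κA ≤ j → j < i + κB →
    θ j = hM ∧ e j = εmin ∧ x j = y j ∧
    x j ∈ tips θ x y (j - εmin) \ FB θ x y hM εmin κA i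

/-- `c_i := F(t_i + κB) + |V'(t_i + κB)|`. -/
noncomputable def ci (θ x y : ℕ → ℕ) (κB i : ℕ) : ℕ :=
  F θ x y (i + κB) + (V' θ (i + κB)).ncard

/-- The labelling `ξ (i, j, k)` of the interchange structure: for `j = 1` it is the
`k`-th smallest element of `F(t_i + κB) ∪ V'(t_i + κB)` (1-indexed), and for `j ≥ 2`
it is the vertex arriving at time `i + κB - 1 + (j - 2) * c_i + k`. -/
noncomputable def ξ (θ x y : ℕ → ℕ) (κB i j k : ℕ) : ℕ :=
  if j ≤ 1 then Nat.nth (fun v => v ∈ free θ x y (i + κB) ∪ V' θ (i + κB)) (k - 1)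
  else i + κB - 1 + (j - 2) * ci θ x y κB i + k

/-- Step-C (interchange) event: every vertex `v` arriving at a time in
`[i + κB, i + κC]`, with additional label `(i, j, k)` where
`j = 2 + (v - (i + κB)) / c_i` and `k = (v - (i + κB)) % c_i + 1`, has POW duration
`hM`, delay `εmin`, and parents `x v = ξ (i, j-1, max 1 (k-1))`,
`y v = ξ (i, j-1, min (k+1) c_i)`. -/
noncomputable def StepC (θ e x y : ℕ → ℕ) (hM εmin κB κC i : ℕ) : Prop :=
  ∀ v, 1 ≤ v → i + κB ≤ v → v ≤ i + κC →
    θ v = hM ∧ e v = εmin ∧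
    x v = ξ θ x y κB i (1 + (v - (i + κB)) / ci θ x y κB i)
            (max 1 ((v - (i + κB)) % ci θ x y κB i)) ∧
    y v = ξ θ x y κB i (1 + (v - (i + κB)) / ci θ x y κB i)
            (min ((v - (i + κB)) % ci θ x y κB i + 2) (ci θ x y κB i))

end IotaDAG

open IotaDAG

namespace IotaAux

open IotaDAG

variable {θ e x y : ℕ → ℕ}

lemma E_mono {m n : ℕ} (hmn : m ≤ n) : E θ x y m ⊆ E θ x y n := by
  rintro p ⟨k, hk1, hk2, hk3⟩
  exact ⟨k, hk1, by omega, hk3⟩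

lemma V_sub_Iic (θ : ℕ → ℕ) (n : ℕ) : V θ n ⊆ Set.Iic n := by
  rintro k hk
  simp only [V, Set.mem_union, Set.mem_singleton_iff, Set.mem_setOf_eq] at hk
  simp only [Set.mem_Iic]
  rcases hk with rfl | ⟨-, hk⟩ <;> omega

lemma mem_V_lt {n vm : ℕ} (hn : 0 < n) (hvm : vm ∈ V θ n) : vm < n := by
  simp only [V, Set.mem_union, Set.mem_singleton_iff, Set.mem_setOf_eq] at hvm
  rcases hvm with rfl | ⟨-, hk⟩ <;> omega

lemma tips_finite (θ x y : ℕ → ℕ) (n : ℕ) : (tips θ x y n).Finite :=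
  (Set.finite_Iic n).subset (fun v hv => V_sub_Iic θ n hv.1)

lemma V'_finite (θ : ℕ → ℕ) (n : ℕ) : (V' θ n).Finite :=
  (Set.finite_Iic n).subset (fun v hv => le_of_lt hv.2.1)

lemma L_step (M : ℕ) (h : ℕ → ℕ)
    (hθ : ∀ k, 1 ≤ k → ∃ j, 1 ≤ j ∧ j ≤ M ∧ θ k = h j) (n : ℕ) :
    L θ x y (n + 1) ≤ L θ x y n + M := by
  have hsub : tips θ x y (n + 1) ⊆
      tips θ x y n ∪ ↑((Finset.Icc 1 M).image fun j => n - h j) := by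
    rintro v ⟨hvV, hvE⟩
    simp only [V, Set.mem_union, Set.mem_singleton_iff, Set.mem_setOf_eq] at hvV
    rcases hvV with rfl | ⟨hv1, hvlt⟩
    · exact Or.inl ⟨Or.inl rfl, fun k hk => hvE k (E_mono (Nat.le_succ n) hk)⟩
    · rcases Nat.lt_succ_iff_lt_or_eq.1 hvlt with hlt | heq
      · exact Or.inl ⟨Or.inr ⟨hv1, hlt⟩, fun k hk => hvE k (E_mono (Nat.le_succ n) hk)⟩
      · right
        obtain ⟨j, hj1, hjM, hθv⟩ := hθ v hv1
        simp only [Finset.coe_image, Set.mem_image, Finset.mem_coe, Finset.mem_Icc]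
        exact ⟨j, ⟨hj1, hjM⟩, by omega⟩
  have h1 : L θ x y (n + 1) ≤
      (tips θ x y n ∪ ↑((Finset.Icc 1 M).image fun j => n - h j)).ncard :=
    Set.ncard_le_ncard hsub ((tips_finite θ x y n).union (Finset.finite_toSet _))
  have h2 := Set.ncard_union_le (tips θ x y n) (↑((Finset.Icc 1 M).image fun j => n - h j))
  have h3 : ((↑((Finset.Icc 1 M).image fun j => n - h j) : Set ℕ)).ncard ≤ M := by
    rw [Set.ncard_coe_finset]
    have := Finset.card_image_le (s := Finset.Icc 1 M) (f := fun j => n - h j)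
    have hcard : (Finset.Icc 1 M).card = M := by rw [Nat.card_Icc]; omega
    omega
  have : L θ x y n = (tips θ x y n).ncard := rfl
  omega

lemma L_le (M : ℕ) (h : ℕ → ℕ)
    (hθ : ∀ k, 1 ≤ k → ∃ j, 1 ≤ j ∧ j ≤ M ∧ θ k = h j) (i : ℕ) :
    ∀ t, L θ x y (i + t) ≤ L θ x y i + M * t := by
  intro t
  induction t with
  | zero => simp
  | succ t ih =>
      have := L_step (θ := θ) (x := x) (y := y) M h hθ (i + t)
      have harith : i + (t + 1) = (i + t) + 1 := rfl
      rw [harith]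
      calc L θ x y ((i + t) + 1) ≤ L θ x y (i + t) + M := this
        _ ≤ L θ x y i + M * t + M := by omega
        _ = L θ x y i + M * (t + 1) := by ring

lemma V'_ncard (H n : ℕ) (hθle : ∀ k, 1 ≤ k → θ k ≤ H) : (V' θ n).ncard ≤ H := by
  have hsub : V' θ n ⊆ ↑(Finset.Ico (n - H) n) := by
    rintro k ⟨hk1, hk2, hk3⟩
    have := hθle k hk1
    simp only [Finset.coe_Ico, Set.mem_Ico]
    omega
  calc (V' θ n).ncard ≤ (↑(Finset.Ico (n - H) n) : Set ℕ).ncard :=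
        Set.ncard_le_ncard hsub (Finset.finite_toSet _)
    _ = (Finset.Ico (n - H) n).card := Set.ncard_coe_finset _
    _ ≤ H := by rw [Nat.card_Ico]; omega

end IotaAux
/-- Suppose the bottleneck event
`ℬ_i = {L(t_i) ≤ b} ∩ A_i ∩ B_i ∩ C_i` occurs.  Then every vertex
`v⁺ > t_i + κ_C` has a directed path in the limiting graph to every vertex
`v⁻ ∈ V(t_i + κ_B)`. -/
theorem bottleneck_connects_everything
    (M : ℕ) (hM2 : 2 ≤ M)
    (h : ℕ → ℕ) (hpos : 0 < h 1) (hmono : StrictMonoOn h (Set.Icc 1 M))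
    (Iε : Finset ℕ) (hIε : Iε.Nonempty) (hεmin : 0 < Iε.min' hIε)
    (θ e x y : ℕ → ℕ)
    (hθ : ∀ n, 1 ≤ n → ∃ k, 1 ≤ k ∧ k ≤ M ∧ θ n = h k)
    (he : ∀ n, 1 ≤ n → e n ∈ Iε)
    (hvalid : Valid θ e x y)
    (hhM : 1 < h M)
    (b : ℝ)
    (hb : 10 * (h M : ℝ) - 6 * (h 1 : ℝ) + 3 * M * (Iε.max' hIε : ℝ) + 2 < b)
    (κA κB κC : ℕ)
    (hκA : 1 + max (2 * (h M : ℝ))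
        (3 * (h M : ℝ) * ((h M : ℝ) + (Iε.min' hIε : ℝ)) / ((h M : ℝ) - 1)) < (κA : ℝ))
    (hκB : κB = κA + Iε.min' hIε + 1)
    (hκC : (κC : ℝ) = κB + 2 * (b + M * κB + h M) ^ 2 + h M + Iε.max' hIε + 1)
    (i : ℕ)
    (hLb : (L θ x y i : ℝ) ≤ b)
    (hA : StepA θ e x y (h M) (Iε.min' hIε) κA i)
    (hB : StepB θ e x y (h M) (Iε.min' hIε) κA κB i)
    (hC : StepC θ e x y (h M) (Iε.min' hIε) κB κC i) :
    ∀ vm ∈ V θ (i + κB), ∀ vp : ℕ, i + κC < vp → Reach x y vp vm := by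
  classical
  open IotaAux in
  -- basic bounds
  have hH2 : 2 ≤ h M := hhM
  have hε1 : 1 ≤ Iε.min' hIε := hεmin
  have hM1 : (1 : ℕ) ∈ Set.Icc 1 M := ⟨le_refl 1, by omega⟩
  have hMM : M ∈ Set.Icc 1 M := ⟨by omega, le_refl M⟩
  have hθle : ∀ n, 1 ≤ n → θ n ≤ h M := by
    intro n hn
    obtain ⟨k, hk1, hkM, hθn⟩ := hθ n hn
    have := hmono.monotoneOn ⟨hk1, hkM⟩ hMM hkM
    omega
  have hθge : ∀ n, 1 ≤ n → 1 ≤ θ n := by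
    intro n hn
    obtain ⟨k, hk1, hkM, hθn⟩ := hθ n hn
    have := hmono.monotoneOn hM1 ⟨hk1, hkM⟩ hk1
    omega
  have hemax : ∀ n, 1 ≤ n → e n ≤ Iε.max' hIε := fun n hn => Finset.le_max' _ _ (he n hn)
  have hh1M : h 1 < h M := hmono hM1 hMM (by omega)
  -- real arithmetic
  have hb0 : (0:ℝ) ≤ b := by
    have h1 : ((h 1 : ℝ)) ≤ (h M : ℝ) := by exact_mod_cast le_of_lt hh1M
    have h2 : (0:ℝ) ≤ 3 * (M:ℝ) * (Iε.max' hIε : ℝ) := by positivity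
    have h3 : (0:ℝ) ≤ (h M : ℝ) := by positivity
    nlinarith [hb]
  have hLB : L θ x y i ≤ Nat.floor b := Nat.le_floor hLb
  set Z : ℕ := Nat.floor b + M * κB + h M with hZdef
  have hfloor : (Nat.floor b : ℝ) ≤ b := Nat.floor_le hb0
  have hκCge : κB + 2*(Z*Z) + h M + Iε.max' hIε + 1 ≤ κC := by
    have hZb : (Z:ℝ) ≤ b + (M:ℝ) * κB + h M := by rw [hZdef]; push_cast; linarith
    have hZ0 : (0:ℝ) ≤ (Z:ℝ) := Nat.cast_nonneg _
    have hsq : (Z:ℝ) * Z ≤ (b + (M:ℝ)*κB + h M)^2 := by nlinarith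
    have hfin : ((κB + 2*(Z*Z) + h M + Iε.max' hIε + 1 : ℕ) : ℝ) ≤ (κC:ℝ) := by
      push_cast
      rw [hκC]
      push_cast
      linarith
    exact_mod_cast hfin
  have hκA2 : 2 * h M + 2 ≤ κA := by
    have h1 : (2*(h M:ℝ)) ≤ max (2 * (h M : ℝ))
        (3 * (h M : ℝ) * ((h M : ℝ) + (Iε.min' hIε : ℝ)) / ((h M : ℝ) - 1)) := le_max_left _ _
    have h2 : ((2 * h M + 1 : ℕ) : ℝ) < (κA:ℝ) := by push_cast; linarith
    have h3 : 2 * h M + 1 < κA := by exact_mod_cast h2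
    omega
  have hκB4 : 2 * h M + 4 ≤ κB := by omega
  -- c and its bounds
  set c : ℕ := ci θ x y κB i with hcdef
  have hcF : c = F θ x y (i + κB) + (V' θ (i + κB)).ncard := hcdef
  have hfinF : (free θ x y (i + κB)).Finite :=
    (tips_finite θ x y (i + κB)).subset Set.diff_subset
  have hfinV' : (V' θ (i + κB)).Finite := V'_finite θ (i + κB)
  have hdisj : Disjoint (free θ x y (i + κB)) (V' θ (i + κB)) := by
    rw [Set.disjoint_left]
    rintro a ⟨⟨haV, -⟩, -⟩ ⟨ha1, ha2, ha3⟩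
    simp only [V, Set.mem_union, Set.mem_singleton_iff, Set.mem_setOf_eq] at haV
    rcases haV with rfl | ⟨-, hlt⟩ <;> omega
  have hScard : (free θ x y (i + κB) ∪ V' θ (i + κB)).ncard = c := by
    rw [Set.ncard_union_eq hdisj hfinF hfinV', hcF]; rfl
  have hc1 : 1 ≤ c := by
    have hjB := hB (i + κB - 1) (by omega) (by omega) (by omega)
    have hj : (i + κB - 1) ∈ V' θ (i + κB) := by
      refine ⟨by omega, by omega, ?_⟩
      have := hjB.1
      omega
    have hpos : 0 < (V' θ (i + κB)).ncard := (Set.ncard_pos hfinV').mpr ⟨_, hj⟩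
    omega
  have hcZ : c ≤ Z := by
    have hF : F θ x y (i + κB) ≤ L θ x y (i + κB) :=
      Set.ncard_le_ncard Set.diff_subset (tips_finite θ x y (i + κB))
    have hL := L_le (θ := θ) (x := x) (y := y) M h hθ i κB
    have hV' := V'_ncard (θ := θ) (h M) (i + κB) hθle
    omega
  have hZpos : 0 < Z := by omega
  have hZZ : Z ≤ Z * Z := Nat.le_mul_of_pos_left Z hZpos
  set pr : ℕ → Prop := (fun v => v ∈ free θ x y (i + κB) ∪ V' θ (i + κB)) with hpr
  -- div/mod decomposition helpers
  have hdiv : ∀ q r : ℕ, r < c →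
      (i + κB + q * c + r - (i + κB)) / c = q ∧
      (i + κB + q * c + r - (i + κB)) % c = r := by
    intro q r hr
    have h1 : i + κB + q * c + r - (i + κB) = r + c * q := by
      have : q * c = c * q := Nat.mul_comm _ _
      omega
    constructor
    · rw [h1, Nat.add_mul_div_left _ _ (by omega : 0 < c), Nat.div_eq_of_lt hr, Nat.zero_add]
    · rw [h1, Nat.add_mul_mod_self_left, Nat.mod_eq_of_lt hr]
  have hdecomp : ∀ w, i + κB ≤ w →
      w = i + κB + ((w - (i + κB)) / c) * c + ((w - (i + κB)) % c) := by
    intro w hw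
    have h1 := Nat.div_add_mod (w - (i + κB)) c
    have h2 : c * ((w - (i + κB)) / c) = ((w - (i + κB)) / c) * c := Nat.mul_comm _ _
    omega
  -- Step-C edge formulas, level ≥ 1
  have stepx : ∀ q r, 1 ≤ q → r < c → i + κB + q * c + r ≤ i + κC →
      x (i + κB + q * c + r) = i + κB + (q - 1) * c + (max 1 r - 1) ∧
      y (i + κB + q * c + r) = i + κB + (q - 1) * c + (min (r + 2) c - 1) ∧
      θ (i + κB + q * c + r) = h M := by
    intro q r hq hr hle
    obtain ⟨hθv, hev, hxv, hyv⟩ := hC (i + κB + q * c + r) (by omega) (by omega) hle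
    obtain ⟨hdq, hdr⟩ := hdiv q r hr
    rw [hdq, hdr] at hxv hyv
    have hmax : 1 ≤ max 1 r := le_max_left _ _
    have hmin : 1 ≤ min (r + 2) c := le_min (by omega) hc1
    have h2 : 1 + q - 2 = q - 1 := by omega
    refine ⟨?_, ?_, hθv⟩
    · rw [hxv]
      simp only [ξ]
      rw [if_neg (by omega), ← hcdef, h2]
      omega
    · rw [hyv]
      simp only [ξ]
      rw [if_neg (by omega), ← hcdef, h2]
      omega
  -- Step-C edge formulas, level 0 (pointing to the seed set)
  have stepx0 : ∀ r, r < c → i + κB + r ≤ i + κC →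
      x (i + κB + r) = Nat.nth pr (max 1 r - 1) ∧
      y (i + κB + r) = Nat.nth pr (min (r + 2) c - 1) ∧
      θ (i + κB + r) = h M := by
    intro r hr hle
    obtain ⟨hθv, hev, hxv, hyv⟩ := hC (i + κB + r) (by omega) (by omega) hle
    have he0 : i + κB + r - (i + κB) = r := by omega
    rw [he0, Nat.div_eq_of_lt hr, Nat.mod_eq_of_lt hr] at hxv hyv
    refine ⟨?_, ?_, hθv⟩
    · rw [hxv]
      simp only [ξ]
      rw [if_pos (by omega : 1 + 0 ≤ 1), hpr]
    · rw [hyv]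
      simp only [ξ]
      rw [if_pos (by omega : 1 + 0 ≤ 1), ← hcdef, hpr]
  -- x-descent through the interchange levels
  have descend : ∀ s q r, r < c → s ≤ q → i + κB + q * c + r ≤ i + κC →
      Reach x y (i + κB + q * c + r) (i + κB + (q - s) * c + (r - s)) := by
    intro s
    induction s with
    | zero => intro q r hr hs hle; exact Relation.ReflTransGen.refl
    | succ s ih =>
        intro q r hr hs hle
        obtain ⟨hxv, -, -⟩ := stepx q r (by omega) hr hle
        have hm : max 1 r - 1 = r - 1 := by omega
        rw [hm] at hxv
        have hmul : (q - 1) * c ≤ q * c := Nat.mul_le_mul_right c (by omega)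
        have hrest := ih (q - 1) (r - 1) (by omega) (by omega) (by omega)
        rw [show q - 1 - s = q - (s + 1) by omega, show r - 1 - s = r - (s + 1) by omega]
          at hrest
        exact Relation.ReflTransGen.head ⟨by omega, Or.inl hxv⟩ hrest
  -- y-climb along level 0
  have climb : ∀ s r, r + s ≤ c - 1 → i + κB + s * c + r ≤ i + κC →
      Reach x y (i + κB + s * c + r) (i + κB + (r + s)) := by
    intro s
    induction s with
    | zero =>
        intro r hrs hle
        have h0 : i + κB + 0 * c + r = i + κB + (r + 0) := by simp
        rw [h0]
        exact Relation.ReflTransGen.refl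
    | succ s ih =>
        intro r hrs hle
        obtain ⟨-, hyv, -⟩ := stepx (s + 1) r (by omega) (by omega) hle
        have hmin : min (r + 2) c - 1 = r + 1 := by omega
        rw [hmin] at hyv
        have hmul : (s + 1) * c = s * c + c := Nat.succ_mul s c
        have hrest := ih (r + 1) (by omega) (by omega)
        rw [show r + 1 + s = r + (s + 1) by omega] at hrest
        have hstep : (s + 1 - 1) * c = s * c := by norm_num
        rw [hstep] at hyv
        exact Relation.ReflTransGen.head ⟨by omega, Or.inr hyv⟩ hrest
  -- from a sufficiently high window vertex one reaches every seed element
  have toNth : ∀ w m, i + κB ≤ w → w ≤ i + κC → m < c →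
      (w - (i + κB)) % c + m ≤ (w - (i + κB)) / c →
      Reach x y w (Nat.nth pr m) := by
    intro w m hwN hwC hm hqr
    have hr : (w - (i + κB)) % c < c := Nat.mod_lt _ (by omega)
    have hv := hdecomp w hwN
    set q := (w - (i + κB)) / c with hqdef
    set r := (w - (i + κB)) % c with hrdef
    rcases Nat.eq_zero_or_pos m with rfl | hm1
    · have hreach := descend q q r hr (le_refl q) (by omega)
      rw [show q - q = 0 by omega, show r - q = 0 by omega, Nat.zero_mul] at hreach
      simp only [Nat.add_zero] at hreach
      obtain ⟨hx0, -, -⟩ := stepx0 0 hc1 (by omega)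
      simp only [Nat.add_zero] at hx0
      have hidx : max 1 0 - 1 = 0 := by omega
      rw [hidx] at hx0
      rw [hv]
      exact hreach.tail ⟨by omega, Or.inl hx0⟩
    · have hreach1 := descend (q - (m - 1)) q r hr (by omega) (by omega)
      rw [show q - (q - (m - 1)) = m - 1 by omega, show r - (q - (m - 1)) = 0 by omega]
        at hreach1
      have hmulle : (m - 1) * c ≤ q * c := Nat.mul_le_mul_right c (by omega)
      have hreach2 := climb (m - 1) 0 (by omega) (by omega)
      rw [show (0 : ℕ) + (m - 1) = m - 1 by omega] at hreach2
      simp only [Nat.add_zero] at hreach1 hreach2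
      obtain ⟨-, hy0, -⟩ := stepx0 (m - 1) (by omega) (by omega)
      have hidx : min (m - 1 + 2) c - 1 = m := by omega
      rw [hidx] at hy0
      rw [hv]
      exact (hreach1.trans hreach2).tail ⟨by omega, Or.inr hy0⟩
  -- every seed element is selected by an early window vertex
  have selNth : ∀ m, m < c → ∃ v, i + κB ≤ v ∧ v ≤ i + κB + c ∧ θ v = h M ∧
      (x v = Nat.nth pr m ∨ y v = Nat.nth pr m) := by
    intro m hm
    rcases Nat.eq_zero_or_pos m with rfl | hm1
    · obtain ⟨hx0, -, hθ0⟩ := stepx0 0 hc1 (by omega)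
      have hidx : max 1 0 - 1 = 0 := by omega
      rw [hidx] at hx0
      exact ⟨i + κB + 0, by omega, by omega, hθ0, Or.inl hx0⟩
    · obtain ⟨-, hy0, hθ0⟩ := stepx0 (m - 1) (by omega) (by omega)
      have hidx : min (m - 1 + 2) c - 1 = m := by omega
      rw [hidx] at hy0
      exact ⟨i + κB + (m - 1), by omega, by omega, hθ0, Or.inr hy0⟩
  -- the finite seed set and its enumeration
  have hfinS : (setOf pr).Finite := by
    simp only [hpr, Set.setOf_mem_eq]
    exact hfinF.union hfinV'
  have hcardc : hfinS.toFinset.card = c := by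
    rw [← Set.ncard_eq_toFinset_card _ hfinS]
    simp only [hpr, Set.setOf_mem_eq]
    exact hScard
  -- no vertex older than i + κB is a tip at any late time
  have noOld : ∀ u T, u < i + κB → i + κB + 2 * (Z * Z) + h M + 2 ≤ T →
      u ∉ tips θ x y T := by
    intro u T hu hT htip
    obtain ⟨huV, huE⟩ := htip
    have hkillS : u ∈ free θ x y (i + κB) ∪ V' θ (i + κB) → False := by
      intro huS
      have hpru : pr u := by rw [hpr]; exact huS
      have hcount : Nat.count pr u < c := by
        have := Nat.count_lt_card hfinS hpru
        exact lt_of_lt_of_eq this hcardc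
      have hnth : Nat.nth pr (Nat.count pr u) = u := Nat.nth_count hpru
      obtain ⟨v, hv1, hv2, hθv, hxy⟩ := selNth (Nat.count pr u) hcount
      rcases hxy with hxx | hyy
      · exact huE v ⟨v, by omega, by omega, Or.inl (by rw [hxx, hnth])⟩
      · exact huE v ⟨v, by omega, by omega, Or.inr (by rw [hyy, hnth])⟩
    by_cases huVN : u ∈ V θ (i + κB)
    · by_cases hutip : u ∈ tips θ x y (i + κB)
      · by_cases hufree : u ∈ free θ x y (i + κB)
        · exact hkillS (Or.inl hufree)
        · have hupend : u ∈ pend θ x y (i + κB) := by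
            by_contra hnp
            exact hufree ⟨hutip, hnp⟩
          obtain ⟨-, j, hjV', hjxy⟩ := hupend
          have hθj : θ j ≤ h M := hθle j hjV'.1
          have hjlt : j < i + κB := hjV'.2.1
          rcases hjxy with h' | h'
          · exact huE j ⟨j, hjV'.1, by omega, Or.inl (by rw [h'])⟩
          · exact huE j ⟨j, hjV'.1, by omega, Or.inr (by rw [h'])⟩
      · have hex : ∃ k, (k, u) ∈ E θ x y (i + κB) := by
          by_contra hno
          push_neg at hno
          exact hutip ⟨huVN, fun k => hno k⟩
        obtain ⟨k, hk⟩ := hex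
        exact huE k (E_mono (by omega) hk)
    · have hu1 : 1 ≤ u := by
        by_contra h0
        push_neg at h0
        refine huVN (Or.inl ?_)
        simp only [Set.mem_singleton_iff]
        omega
      have huV' : u ∈ V' θ (i + κB) := by
        refine ⟨hu1, hu, ?_⟩
        by_contra hlt
        push_neg at hlt
        exact huVN (Or.inr ⟨hu1, by omega⟩)
      exact hkillS (Or.inr huV')
  -- window tips at late times are high in the interchange structure
  have windowTip : ∀ w T, i + κB ≤ w → w ≤ i + κC → w ∈ tips θ x y T →
      i + κC + 1 ≤ T + Iε.max' hIε →
      (w - (i + κB)) % c + (c - 1) ≤ (w - (i + κB)) / c := by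
    intro w T hwN hwC htip hT2
    have hr : (w - (i + κB)) % c < c := Nat.mod_lt _ (by omega)
    have hv := hdecomp w hwN
    obtain ⟨q, hqdef⟩ : ∃ t, (w - (i + κB)) / c = t := ⟨_, rfl⟩
    obtain ⟨r, hrdef⟩ : ∃ t, (w - (i + κB)) % c = t := ⟨_, rfl⟩
    rw [hqdef] at hv ⊢
    rw [hrdef] at hv hr ⊢
    have hbig : i + κC + 1 ≤ w + c + 1 + h M + Iε.max' hIε := by
      by_contra hcon
      push_neg at hcon
      have hcon' : w + c + 1 + h M + Iε.max' hIε ≤ i + κC := by omega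
      have hmul : (q + 1) * c = q * c + c := Nat.succ_mul q c
      have hveq1 : i + κB + (q + 1) * c + (r + 1) = w + c + 1 := by rw [hmul]; omega
      have hveq2 : i + κB + (q + 1) * c + r = w + c := by rw [hmul]; omega
      by_cases hr2 : r + 2 ≤ c
      · obtain ⟨hxv, -, hθv⟩ := stepx (q + 1) (r + 1) (by omega) (by omega) (by omega)
        have hsimp : (q + 1 - 1) * c = q * c := by norm_num
        have hidx : max 1 (r + 1) - 1 = r := by omega
        rw [hsimp, hidx] at hxv
        exact htip.2 (i + κB + (q + 1) * c + (r + 1))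
          ⟨i + κB + (q + 1) * c + (r + 1), by omega, by omega,
            Or.inl (by rw [hxv, ← hv])⟩
      · obtain ⟨-, hyv, hθv⟩ := stepx (q + 1) r (by omega) hr (by omega)
        have hsimp : (q + 1 - 1) * c = q * c := by norm_num
        have hidx : min (r + 2) c - 1 = r := by omega
        rw [hsimp, hidx] at hyv
        exact htip.2 (i + κB + (q + 1) * c + r)
          ⟨i + κB + (q + 1) * c + r, by omega, by omega,
            Or.inr (by rw [hyv, ← hv])⟩
    have hsubmul : (2 * c - 1) * c = 2 * c * c - 1 * c := Nat.sub_mul _ _ _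
    have hassoc : 2 * c * c = 2 * (c * c) := mul_assoc 2 c c
    have hccZZ : c * c ≤ Z * Z := Nat.mul_le_mul hcZ hcZ
    have hq21 : (2 * c - 1) * c ≤ w - (i + κB) := by omega
    have hqge : 2 * c - 1 ≤ q := by
      rw [← hqdef]
      exact (Nat.le_div_iff_mul_le (by omega : 0 < c)).mpr hq21
    omega
  -- every vertex of V(i + κB) is reachable from some seed element
  have down : ∀ d vm, vm ∈ V θ (i + κB) → i + κB - vm ≤ d →
      ∃ wS, wS ∈ free θ x y (i + κB) ∪ V' θ (i + κB) ∧ Reach x y wS vm := by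
    intro d
    induction d with
    | zero =>
        intro vm hvm hd
        have := mem_V_lt (θ := θ) (by omega) hvm
        omega
    | succ d ih =>
        intro vm hvm hd
        by_cases htip : vm ∈ tips θ x y (i + κB)
        · by_cases hfree : vm ∈ free θ x y (i + κB)
          · exact ⟨vm, Or.inl hfree, Relation.ReflTransGen.refl⟩
          · have hpend : vm ∈ pend θ x y (i + κB) := by
              by_contra hnp
              exact hfree ⟨htip, hnp⟩
            obtain ⟨-, j, hjV', hjxy⟩ := hpend
            exact ⟨j, Or.inr hjV', Relation.ReflTransGen.single ⟨hjV'.1, hjxy⟩⟩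
        · have hex : ∃ k, (k, vm) ∈ E θ x y (i + κB) := by
            by_contra hno
            push_neg at hno
            exact htip ⟨hvm, fun k => hno k⟩
          obtain ⟨k, k', hk1, hk2, hkor⟩ := hex
          have hvmk : ∀ hxm : x k' = vm ∨ y k' = vm, vm < k' := by
            intro hxm
            obtain ⟨hxk, hyk⟩ := hvalid k' hk1
            rcases hxm with h' | h'
            · have hm2 := hxk.1
              rw [h'] at hm2
              simp only [V, Set.mem_union, Set.mem_singleton_iff, Set.mem_setOf_eq] at hm2
              rcases hm2 with h0 | ⟨-, hlt⟩ <;> omega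
            · have hm2 := hyk.1
              rw [h'] at hm2
              simp only [V, Set.mem_union, Set.mem_singleton_iff, Set.mem_setOf_eq] at hm2
              rcases hm2 with h0 | ⟨-, hlt⟩ <;> omega
          have hkV : k' ∈ V θ (i + κB) := Or.inr ⟨hk1, hk2⟩
          rcases hkor with hh | hh
          · rw [Prod.mk.injEq] at hh
            obtain ⟨-, hxm⟩ := hh
            have hlt : vm < k' := hvmk (Or.inl hxm.symm)
            obtain ⟨wS, hwS, hr⟩ := ih k' hkV (by omega)
            exact ⟨wS, hwS, hr.tail ⟨hk1, Or.inl hxm.symm⟩⟩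
          · rw [Prod.mk.injEq] at hh
            obtain ⟨-, hxm⟩ := hh
            have hlt : vm < k' := hvmk (Or.inr hxm.symm)
            obtain ⟨wS, hwS, hr⟩ := ih k' hkV (by omega)
            exact ⟨wS, hwS, hr.tail ⟨hk1, Or.inr hxm.symm⟩⟩
  -- every late vertex reaches every seed element
  have main : ∀ n vp, vp ≤ n → i + κC < vp → ∀ m, m < c →
      Reach x y vp (Nat.nth pr m) := by
    intro n
    induction n with
    | zero => intro vp h0 hvp m hm; omega
    | succ n ih =>
        intro vp hvpn hvp m hm
        have hvp1 : 1 ≤ vp := by omega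
        obtain ⟨hxtip, -⟩ := hvalid vp hvp1
        have hevp : e vp ≤ Iε.max' hIε := hemax vp hvp1
        have hT1 : i + κB + 2 * (Z * Z) + h M + 2 ≤ vp - e vp := by omega
        have hT2 : i + κC + 1 ≤ (vp - e vp) + Iε.max' hIε := by omega
        have hwlt : x vp < vp := by
          have := mem_V_lt (θ := θ) (by omega : 0 < vp - e vp) hxtip.1
          omega
        by_cases hwhi : i + κC < x vp
        · exact Relation.ReflTransGen.head ⟨hvp1, Or.inl rfl⟩ (ih (x vp) (by omega) hwhi m hm)
        · by_cases hwlo : x vp < i + κB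
          · exact absurd hxtip (noOld (x vp) (vp - e vp) hwlo hT1)
          · have hwh := windowTip (x vp) (vp - e vp) (by omega) (by omega) hxtip hT2
            refine Relation.ReflTransGen.head ⟨hvp1, Or.inl rfl⟩ ?_
            exact toNth (x vp) m (by omega) (by omega) hm (by omega)
  -- assemble
  intro vm hvm vp hvp
  obtain ⟨wS, hwS, hreach⟩ := down (i + κB) vm hvm (by omega)
  have hprw : pr wS := by rw [hpr]; exact hwS
  have hcount : Nat.count pr wS < c := by
    have := Nat.count_lt_card hfinS hprw
    exact lt_of_lt_of_eq this hcardc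
  have hnth : Nat.nth pr (Nat.count pr wS) = wS := Nat.nth_count hprw
  have hmain := main vp vp (le_refl vp) hvp (Nat.count pr wS) hcount
  exact hmain.trans (by rw [hnth]; exact hreach)
end

section
/- In the IOTA DAG model, suppose the bottleneck event ℬ_i = {L(t_i) ≤ b} ∩ A_i ∩ B_i ∩ C_i occurs. Then for every time t ≥ t_i + κ_C − ε_max − h_M, the sets of tips satisfy L(t_i) ∩ L(t) = ∅. -/
/- An old tip that survives until time `i + κ_B` is then either pending, and approved within
`h_M` steps by the vertex already working on it, or free, and then it is one of the `c_i`
first-layer labels `(i, 1, k)` of Step C, hence a parent of one of the `c_i` vertices arriving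
right after `i + κ_B`. These finish their POW by `i + κ_B + c_i + h_M`, and the choice of `κ_C`
(with `c_i ≤ L(t_i) + κ_B + 2 h_M ≤ b + κ_B + 2 h_M`) makes this at most
`i + κ_C - ε_max - h_M`. -/

namespace IotaDAG

variable {θ x y : ℕ → ℕ}

lemma V_mono {m n : ℕ} (h : m ≤ n) : V θ m ⊆ V θ n := by
  rintro v (hv | ⟨hv1, hv2⟩)
  · exact Or.inl hv
  · exact Or.inr ⟨hv1, hv2.trans_le h⟩

lemma E_mono {m n : ℕ} (h : m ≤ n) : E θ x y m ⊆ E θ x y n := by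
  rintro p ⟨k, hk1, hk2, hk3⟩
  exact ⟨k, hk1, hk2.trans_le h, hk3⟩

lemma mem_tips_of_le_of_le {v m n n' : ℕ} (hm : v ∈ tips θ x y m)
    (hn' : v ∈ tips θ x y n') (h₁ : m ≤ n) (h₂ : n ≤ n') : v ∈ tips θ x y n :=
  ⟨V_mono h₁ hm.1, fun j hj => hn'.2 j (E_mono h₂ hj)⟩

lemma lt_of_mem_V {v n : ℕ} (hv : v ∈ V θ n) : v < n + 1 := by
  rcases hv with rfl | ⟨-, hv⟩ <;> omega

lemma tips_finite (n : ℕ) : (tips θ x y n).Finite :=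
  (Set.finite_Iio (n + 1)).subset fun _ hv => lt_of_mem_V hv.1

lemma V'_finite (n : ℕ) : (V' θ n).Finite :=
  (Set.finite_Iio n).subset fun _ hv => hv.2.1

lemma disjoint_V_V' (n : ℕ) : Disjoint (V θ n) (V' θ n) := by
  rw [Set.disjoint_left]
  rintro v (rfl | ⟨-, hv⟩) ⟨hv1, -, hv3⟩ <;> omega

lemma not_mem_tips_of_edgeRel {j σ t : ℕ} (hj : edgeRel x y j σ) (ht : j + θ j < t) :
    σ ∉ tips θ x y t := fun hσ =>
  hσ.2 j ⟨j, hj.1, ht, hj.2.imp (fun h => by rw [h]) (fun h => by rw [h])⟩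

section BoundedPOW

variable {H : ℕ} (hθ : ∀ n, 1 ≤ n → θ n ≤ H)
include hθ

lemma V'_subset_Ico (n : ℕ) : V' θ n ⊆ Finset.Ico (n - H) n := by
  rintro v ⟨hv1, hv2, hv3⟩
  have := hθ v hv1
  simp only [Finset.coe_Ico, Set.mem_Ico]
  omega

lemma ncard_V'_le (n : ℕ) : (V' θ n).ncard ≤ H :=
  calc (V' θ n).ncard ≤ (Finset.Ico (n - H) n : Set ℕ).ncard :=
        Set.ncard_le_ncard (V'_subset_Ico hθ n) (Finset.finite_toSet _)
    _ ≤ H := by rw [Set.ncard_coe_finset, Nat.card_Ico]; omega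

lemma tips_subset_union_Ico {m n : ℕ} (hmn : m ≤ n) :
    tips θ x y n ⊆ tips θ x y m ∪ Finset.Ico (m - H) n := by
  intro v hv
  by_cases hvm : v ∈ V θ m
  · exact Or.inl ⟨hvm, fun j hj => hv.2 j (E_mono hmn hj)⟩
  · right
    rcases hv.1 with rfl | ⟨hv1, hv2⟩
    · exact absurd (Or.inl rfl) hvm
    · have hvm' : m ≤ v + θ v := by
        by_contra! hlt
        exact hvm (Or.inr ⟨hv1, hlt⟩)
      have := hθ v hv1
      simp only [Finset.coe_Ico, Set.mem_Ico]
      omega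

lemma ncard_tips_le {m n : ℕ} (hmn : m ≤ n) :
    (tips θ x y n).ncard ≤ L θ x y m + (n - m) + H :=
  calc (tips θ x y n).ncard ≤ (tips θ x y m ∪ Finset.Ico (m - H) n).ncard :=
        Set.ncard_le_ncard (tips_subset_union_Ico hθ hmn)
          ((tips_finite m).union (Finset.finite_toSet _))
    _ ≤ L θ x y m + (Finset.Ico (m - H) n : Set ℕ).ncard := Set.ncard_union_le _ _
    _ ≤ L θ x y m + (n - m) + H := by rw [Set.ncard_coe_finset, Nat.card_Ico]; omega

lemma ci_le (κB i : ℕ) : ci θ x y κB i ≤ L θ x y i + κB + 2 * H := by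
  have hF : F θ x y (i + κB) ≤ (tips θ x y (i + κB)).ncard :=
    Set.ncard_le_ncard Set.sdiff_subset (tips_finite _)
  have hT := ncard_tips_le (x := x) (y := y) hθ (Nat.le_add_right i κB)
  have hV' := ncard_V'_le hθ (i + κB)
  unfold ci
  omega

lemma not_mem_tips_of_mem_pend {σ n t : ℕ} (hσ : σ ∈ pend θ x y n) (ht : n + H ≤ t) :
    σ ∉ tips θ x y t := by
  obtain ⟨-, j, ⟨hj1, hjn, -⟩, hxy⟩ := hσ
  exact not_mem_tips_of_edgeRel ⟨hj1, hxy⟩ (by have := hθ j hj1; omega)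

end BoundedPOW

lemma ncard_free_union_V' (κB i : ℕ) :
    (free θ x y (i + κB) ∪ V' θ (i + κB)).ncard = ci θ x y κB i :=
  Set.ncard_union_eq ((disjoint_V_V' _).mono_left fun _ hv => hv.1.1)
    ((tips_finite _).subset Set.sdiff_subset) (V'_finite _)

/-- Label `m < c` of the first Step-C layer is the left parent of vertex `m + 1`, or, when it is
the last label, the right parent of vertex `c - 2` (of vertex `0` if `c = 1`). -/
lemma exists_interchange_index {c m : ℕ} (hm : m < c) :
    ∃ r < c, max 1 r - 1 = m ∨ min (r + 2) c - 1 = m := by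
  rcases Nat.lt_or_ge (m + 1) c with h | h
  · exact ⟨m + 1, h, Or.inl (by omega)⟩
  · rcases Nat.lt_or_ge c 2 with hc | hc
    · exact ⟨0, by omega, Or.inl (by omega)⟩
    · exact ⟨c - 2, by omega, Or.inr (by omega)⟩

section StepC

variable {e : ℕ → ℕ} {hM εmin κB κC i : ℕ}

lemma StepC.first_layer (hC : StepC θ e x y hM εmin κB κC i) (hi : 1 ≤ i + κB)
    {r : ℕ} (hr : r < ci θ x y κB i) (hrκ : κB + r ≤ κC) :
    θ (i + κB + r) = hM ∧
      x (i + κB + r) = Nat.nth (· ∈ free θ x y (i + κB) ∪ V' θ (i + κB)) (max 1 r - 1) ∧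
      y (i + κB + r) =
        Nat.nth (· ∈ free θ x y (i + κB) ∪ V' θ (i + κB)) (min (r + 2) (ci θ x y κB i) - 1) := by
  obtain ⟨hθv, -, hxv, hyv⟩ := hC (i + κB + r) (by omega) (by omega) (by omega)
  rw [Nat.add_sub_cancel_left, Nat.div_eq_of_lt hr, Nat.mod_eq_of_lt hr] at hxv hyv
  exact ⟨hθv, by simpa [ξ] using hxv, by simpa [ξ] using hyv⟩

lemma StepC.exists_edgeRel_of_mem_free (hC : StepC θ e x y hM εmin κB κC i)
    (hi : 1 ≤ i + κB) (hκ : κB + ci θ x y κB i ≤ κC) {σ : ℕ}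
    (hσ : σ ∈ free θ x y (i + κB)) :
    ∃ r < ci θ x y κB i, θ (i + κB + r) = hM ∧ edgeRel x y (i + κB + r) σ := by
  classical
  set P := free θ x y (i + κB) ∪ V' θ (i + κB)
  have hPσ : σ ∈ P := Or.inl hσ
  have hPfin : (Set.ofPred (· ∈ P)).Finite :=
    ((tips_finite _).subset Set.sdiff_subset).union (V'_finite _)
  have hcount : Nat.count (· ∈ P) σ < ci θ x y κB i := by
    have := Nat.count_lt_card hPfin hPσ
    rwa [← Set.ncard_eq_toFinset_card _ hPfin, Set.ofPred_mem_eq, ncard_free_union_V'] at this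
  obtain ⟨r, hr, hxy⟩ := exists_interchange_index hcount
  obtain ⟨hθr, hx, hy⟩ := hC.first_layer hi hr (by omega)
  refine ⟨r, hr, hθr, by omega, ?_⟩
  rw [hx, hy, ← Nat.nth_count (p := (· ∈ P)) hPσ]
  exact hxy.imp (congrArg _) (congrArg _)

theorem StepC.tips_inter_tips_eq_empty (hθ : ∀ n, 1 ≤ n → θ n ≤ hM)
    (hC : StepC θ e x y hM εmin κB κC i) (hκB : 1 ≤ κB) (hκ : κB + ci θ x y κB i ≤ κC)
    {t : ℕ} (ht : i + κB + ci θ x y κB i + hM ≤ t) :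
    tips θ x y i ∩ tips θ x y t = ∅ := by
  refine Set.eq_empty_of_forall_notMem fun σ ⟨hσi, hσt⟩ => ?_
  have hσ : σ ∈ tips θ x y (i + κB) :=
    mem_tips_of_le_of_le hσi hσt (Nat.le_add_right i κB) (by omega)
  by_cases hp : σ ∈ pend θ x y (i + κB)
  · exact not_mem_tips_of_mem_pend hθ hp (by omega) hσt
  · obtain ⟨r, hr, hθr, hedge⟩ := hC.exists_edgeRel_of_mem_free (by omega) hκ ⟨hσ, hp⟩
    exact not_mem_tips_of_edgeRel hedge (by omega) hσt

end StepC

lemma add_le_two_mul_sq_add_one {b c κ M H : ℝ} (hb : 0 ≤ b) (hκ : 0 ≤ κ) (hM : 1 ≤ M)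
    (hH : 1 ≤ H) (hc : c ≤ b + κ + 2 * H) :
    c + H ≤ 2 * (b + M * κ + H) ^ 2 + 1 := by
  have hS : H ≤ b + M * κ + H := by nlinarith
  nlinarith

end IotaDAG

open IotaDAG

theorem old_tips_disappear_general
    (M : ℕ)
    (h : ℕ → ℕ) (hmono : StrictMonoOn h (Set.Icc 1 M))
    (Iε : Finset ℕ) (hIε : Iε.Nonempty)
    (θ e x y : ℕ → ℕ)
    (hθ : ∀ n, 1 ≤ n → ∃ k, 1 ≤ k ∧ k ≤ M ∧ θ n = h k)
    (hhM : 1 < h M)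
    (b : ℝ)
    (κA κB κC : ℕ)
    (hκB : κB = κA + Iε.min' hIε + 1)
    (hκC : (κC : ℝ) = κB + 2 * (b + M * κB + h M) ^ 2 + h M + Iε.max' hIε + 1)
    (i : ℕ)
    (hLb : (L θ x y i : ℝ) ≤ b)
    (hC : StepC θ e x y (h M) (Iε.min' hIε) κB κC i) :
    ∀ t : ℕ, i + κC ≤ t + Iε.max' hIε + h M →
      tips θ x y i ∩ tips θ x y t = ∅ := by
  intro t ht
  have hθle : ∀ n, 1 ≤ n → θ n ≤ h M := fun n hn => by
    obtain ⟨k, hk1, hkM, hθn⟩ := hθ n hn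
    exact hθn ▸ hmono.monotoneOn ⟨hk1, hkM⟩ ⟨hk1.trans hkM, le_rfl⟩ hkM
  obtain ⟨k, hk1, hkM, -⟩ := hθ 1 le_rfl
  have hci : (ci θ x y κB i : ℝ) ≤ b + κB + 2 * h M := by
    have : (ci θ x y κB i : ℝ) ≤ L θ x y i + κB + 2 * h M := by
      exact_mod_cast ci_le (x := x) (y := y) hθle κB i
    linarith
  have hsq := add_le_two_mul_sq_add_one ((Nat.cast_nonneg _).trans hLb) (Nat.cast_nonneg κB)
    (by exact_mod_cast hk1.trans hkM : (1 : ℝ) ≤ M) (by exact_mod_cast hhM.le) hci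
  have hκ : κB + ci θ x y κB i + 2 * h M + Iε.max' hIε ≤ κC := by
    have : ((κB + ci θ x y κB i + 2 * h M + Iε.max' hIε : ℕ) : ℝ) ≤ κC := by
      push_cast; linarith
    exact_mod_cast this
  exact hC.tips_inter_tips_eq_empty hθle (by omega) (by omega) (by omega)

/-- Suppose the bottleneck event
`ℬ_i = {L(t_i) ≤ b} ∩ A_i ∩ B_i ∩ C_i` occurs.  Then for every
`t ≥ t_i + κ_C - ε_max - h_M` (phrased without truncated subtraction as
`t + ε_max + h_M ≥ i + κ_C`) the sets of tips satisfy `L(t_i) ∩ L(t) = ∅`. -/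
theorem old_tips_disappear
    (M : ℕ) (hM2 : 2 ≤ M)
    (h : ℕ → ℕ) (hpos : 0 < h 1) (hmono : StrictMonoOn h (Set.Icc 1 M))
    (Iε : Finset ℕ) (hIε : Iε.Nonempty) (hεmin : 0 < Iε.min' hIε)
    (θ e x y : ℕ → ℕ)
    (hθ : ∀ n, 1 ≤ n → ∃ k, 1 ≤ k ∧ k ≤ M ∧ θ n = h k)
    (he : ∀ n, 1 ≤ n → e n ∈ Iε)
    (hvalid : Valid θ e x y)
    (hhM : 1 < h M)
    (b : ℝ)
    (hb : 10 * (h M : ℝ) - 6 * (h 1 : ℝ) + 3 * M * (Iε.max' hIε : ℝ) + 2 < b)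
    (κA κB κC : ℕ)
    (hκA : 1 + max (2 * (h M : ℝ))
        (3 * (h M : ℝ) * ((h M : ℝ) + (Iε.min' hIε : ℝ)) / ((h M : ℝ) - 1)) < (κA : ℝ))
    (hκB : κB = κA + Iε.min' hIε + 1)
    (hκC : (κC : ℝ) = κB + 2 * (b + M * κB + h M) ^ 2 + h M + Iε.max' hIε + 1)
    (i : ℕ)
    (hLb : (L θ x y i : ℝ) ≤ b)
    (hA : StepA θ e x y (h M) (Iε.min' hIε) κA i)
    (hB : StepB θ e x y (h M) (Iε.min' hIε) κA κB i)
    (hC : StepC θ e x y (h M) (Iε.min' hIε) κB κC i) :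
    ∀ t : ℕ, i + κC ≤ t + Iε.max' hIε + h M →
      tips θ x y i ∩ tips θ x y t = ∅ :=
  old_tips_disappear_general M h hmono Iε hIε θ e x y hθ hhM b κA κB κC hκB hκC i hLb hC
end

section
/- In the IOTA DAG model, consider the metric space (S_*, d_*) of connected rooted DAGs with the local metric d_*(G_1, G_2) = (r+1)^{−1}, where r is the largest integer such that the r-balls rooted at vertex 0 in G_1 and G_2 coincide. Then almost surely the sequence (G(t_i))_{i∈ℕ} is Cauchy in (S_*, d_*), its limit exists, and the limit equals ∪_{i=1}^∞ G(t_i). -/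
namespace IotaDAG

/- ## The limiting graph, local (ball) convergence, ends and confirmation.

Since all the graphs `G(t)` share the same labelled vertex set rooted at `0`, the
metric `d_*(G₁, G₂) = 1/(r+1)` (with `r` the largest radius such that the rooted
`r`-balls of `G₁` and `G₂` coincide) makes a sequence Cauchy iff for every radius
`r` the rooted `r`-balls eventually stabilize, and its limit is the graph whose
`r`-balls are the stabilized ones. -/

/-- Set of directed edges of the limiting graph `⋃ₜ G(t)`. -/
def Einf (x y : ℕ → ℕ) : Set (ℕ × ℕ) :=
  {p | ∃ k, 1 ≤ k ∧ (p = (k, x k) ∨ p = (k, y k))}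

/-- Underlying undirected simple graph of the DAG at time `n`. -/
def ugraph (θ x y : ℕ → ℕ) (n : ℕ) : SimpleGraph ℕ :=
  SimpleGraph.fromRel (fun a b => (a, b) ∈ E θ x y n)

/-- Underlying undirected simple graph of the limiting DAG. -/
def ugraphInf (x y : ℕ → ℕ) : SimpleGraph ℕ :=
  SimpleGraph.fromRel (fun a b => (a, b) ∈ Einf x y)

/-- Vertex set of the `r`-ball rooted at `0` of the DAG at time `n`. -/
def ball (θ x y : ℕ → ℕ) (n r : ℕ) : Set ℕ :=
  {v | v ∈ V θ n ∧ (ugraph θ x y n).Reachable 0 v ∧ (ugraph θ x y n).dist 0 v ≤ r}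

/-- Vertex set of the `r`-ball rooted at `0` of the limiting DAG. -/
def ballInf (x y : ℕ → ℕ) (r : ℕ) : Set ℕ :=
  {v | (ugraphInf x y).Reachable 0 v ∧ (ugraphInf x y).dist 0 v ≤ r}

/-- The rooted `r`-balls of `G(t)` and `G(t')` are identical. -/
def ballEq (θ x y : ℕ → ℕ) (t t' r : ℕ) : Prop :=
  ball θ x y t r = ball θ x y t' r ∧
    ∀ a b, a ∈ ball θ x y t r → b ∈ ball θ x y t r →
      ((a, b) ∈ E θ x y t ↔ (a, b) ∈ E θ x y t')

/-- The rooted `r`-ball of `G(t)` is identical to that of the limiting graph. -/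
def ballEqInf (θ x y : ℕ → ℕ) (t r : ℕ) : Prop :=
  ball θ x y t r = ballInf x y r ∧
    ∀ a b, a ∈ ball θ x y t r → b ∈ ball θ x y t r →
      ((a, b) ∈ E θ x y t ↔ (a, b) ∈ Einf x y)

/-- A ray of the limiting graph: an infinite sequence of vertices successively
joined by directed edges, followed in either direction. -/
def IsRay (x y : ℕ → ℕ) (v : ℕ → ℕ) : Prop :=
  (∀ i, edgeRel x y (v (i + 1)) (v i)) ∨ (∀ i, edgeRel x y (v i) (v (i + 1)))

/-- Two rays are equivalent if some third ray meets each of them infinitely often. -/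
def RayEquiv (x y : ℕ → ℕ) (r₁ r₂ : ℕ → ℕ) : Prop :=
  ∃ r₃, IsRay x y r₃ ∧ (Set.range r₁ ∩ Set.range r₃).Infinite ∧
    (Set.range r₂ ∩ Set.range r₃).Infinite

/-- The limiting DAG is one-ended: all rays are equivalent. -/
def OneEnded (x y : ℕ → ℕ) : Prop :=
  ∀ r₁ r₂ : ℕ → ℕ, IsRay x y r₁ → IsRay x y r₂ → RayEquiv x y r₁ r₂

/-- A vertex of the limiting DAG is confirmed if all but finitely many later
vertices have a directed path to it. -/
def Confirmed (x y : ℕ → ℕ) (v : ℕ) : Prop :=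
  {w | v < w ∧ ¬ Reach x y w v}.Finite

end IotaDAG
namespace IotaDAG

/-- `Σ_i`: the σ-algebra generated by the random variables
`Θ_k, ε_k, X_k, Y_k` for `k = 1, …, i`. -/
def sigAlg {Ω : Type*} (Θ ε X Y : ℕ → Ω → ℕ) (i : ℕ) : MeasurableSpace Ω :=
  ⨆ k ∈ Finset.Icc 1 i,
    (MeasurableSpace.comap (Θ k) ⊤ ⊔ MeasurableSpace.comap (ε k) ⊤ ⊔
      MeasurableSpace.comap (X k) ⊤ ⊔ MeasurableSpace.comap (Y k) ⊤)

end IotaDAG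

namespace IotaDAG

section Deterministic

variable {θ e x y : ℕ → ℕ}

lemma E_subset_Einf (θ x y : ℕ → ℕ) (t : ℕ) : E θ x y t ⊆ Einf x y := by
  rintro p ⟨k, hk1, -, hp⟩; exact ⟨k, hk1, hp⟩

lemma ugraph_le (θ x y : ℕ → ℕ) (t : ℕ) : ugraph θ x y t ≤ ugraphInf x y := by
  intro a b hab
  rw [ugraph, SimpleGraph.fromRel_adj] at hab
  rw [ugraphInf, SimpleGraph.fromRel_adj]
  exact ⟨hab.1, hab.2.imp (fun h => E_subset_Einf θ x y t h)
    (fun h => E_subset_Einf θ x y t h)⟩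

lemma selectors_finite (B C : ℕ)
    (H1 : ∀ n, 1 ≤ n → θ n ≤ B) (H2 : ∀ n, 1 ≤ n → e n ≤ C)
    (H3 : Valid θ e x y) (v : ℕ) :
    {k | 1 ≤ k ∧ (x k = v ∨ y k = v)}.Finite := by
  set S : Set ℕ := {k | 1 ≤ k ∧ (x k = v ∨ y k = v)} with hSdef
  rcases Set.eq_empty_or_nonempty S with hS | hS
  · simp [hS]
  · have hk0 : sInf S ∈ S := Nat.sInf_mem hS
    apply Set.Finite.subset (Set.finite_Iic (sInf S + B + C))
    intro k hk
    simp only [Set.mem_Iic]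
    by_cases hle : k ≤ sInf S
    · omega
    push_neg at hle
    have hk1 : 1 ≤ k := hk.1
    have hval := H3 k hk1
    have hvtip : v ∈ tips θ x y (k - e k) := by
      rcases hk.2 with h' | h'
      · rw [← h']; exact hval.1
      · rw [← h']; exact hval.2
    have hnotE : (sInf S, v) ∉ E θ x y (k - e k) := hvtip.2 (sInf S)
    have hnlt : ¬ (sInf S + θ (sInf S) < k - e k) := by
      intro hcon
      apply hnotE
      refine ⟨sInf S, hk0.1, hcon, ?_⟩
      rcases hk0.2 with h' | h'
      · left; rw [h']
      · right; rw [h']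
    have hθ := H1 (sInf S) hk0.1
    have he := H2 k hk1
    omega

lemma nbrs_finite (B C : ℕ)
    (H1 : ∀ n, 1 ≤ n → θ n ≤ B) (H2 : ∀ n, 1 ≤ n → e n ≤ C)
    (H3 : Valid θ e x y) (v : ℕ) :
    {w | (ugraphInf x y).Adj v w}.Finite := by
  apply Set.Finite.subset
    ((selectors_finite B C H1 H2 H3 v).union ((Set.finite_singleton (y v)).insert (x v)))
  intro w hw
  have hw' : (ugraphInf x y).Adj v w := hw
  rw [ugraphInf, SimpleGraph.fromRel_adj] at hw'
  rcases hw'.2 with ⟨k, hk1, hp | hp⟩ | ⟨k, hk1, hp | hp⟩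
  · simp only [Prod.mk.injEq] at hp; right
    rw [hp.2, hp.1]; exact Set.mem_insert _ _
  · simp only [Prod.mk.injEq] at hp; right
    rw [hp.2, hp.1]; exact Set.mem_insert_of_mem _ rfl
  · simp only [Prod.mk.injEq] at hp; left; exact ⟨hp.1 ▸ hk1, Or.inl (hp.1 ▸ hp.2.symm)⟩
  · simp only [Prod.mk.injEq] at hp; left; exact ⟨hp.1 ▸ hk1, Or.inr (hp.1 ▸ hp.2.symm)⟩

lemma ballInf_finite (B C : ℕ)
    (H1 : ∀ n, 1 ≤ n → θ n ≤ B) (H2 : ∀ n, 1 ≤ n → e n ≤ C)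
    (H3 : Valid θ e x y) : ∀ r, (ballInf x y r).Finite := by
  intro r
  induction r with
  | zero =>
    apply Set.Finite.subset (Set.finite_singleton 0)
    rintro v ⟨hreach, hdist⟩
    have h0 : (ugraphInf x y).dist 0 v = 0 := Nat.le_zero.mp hdist
    simp only [Set.mem_singleton_iff]
    exact (hreach.dist_eq_zero_iff.mp h0).symm
  | succ r ih =>
    apply Set.Finite.subset
      (ih.union (Set.Finite.biUnion ih (fun w _ => nbrs_finite B C H1 H2 H3 w)))
    rintro v ⟨hreach, hdist⟩
    by_cases hv : (ugraphInf x y).dist 0 v ≤ r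
    · exact Or.inl ⟨hreach, hv⟩
    · right
      obtain ⟨p, hp⟩ := hreach.exists_walk_length_eq_dist
      have hlen : p.reverse.length = r + 1 := by
        rw [SimpleGraph.Walk.length_reverse]; omega
      have hnil : ¬ p.reverse.Nil := by
        rw [SimpleGraph.Walk.not_nil_iff_lt_length]; omega
      set w := p.reverse.getVert 1 with hwdef
      have hadj : (ugraphInf x y).Adj v w := p.reverse.adj_snd hnil
      have htail : (p.reverse.tail.length) = r := by
        have := SimpleGraph.Walk.length_tail_add_one hnil
        omega
      have hwreach : (ugraphInf x y).Reachable 0 w := ⟨p.reverse.tail.reverse⟩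
      have hwdist : (ugraphInf x y).dist 0 w ≤ r := by
        have := SimpleGraph.dist_le p.reverse.tail.reverse
        rwa [SimpleGraph.Walk.length_reverse, htail] at this
      exact Set.mem_biUnion (⟨hwreach, hwdist⟩ : w ∈ ballInf x y r) hadj.symm

lemma lift_walk {t r : ℕ}
    (hT : ∀ k ∈ ballInf x y r, k + θ k < t) :
    ∀ {u v : ℕ} (p : (ugraphInf x y).Walk u v),
      (∀ w ∈ p.support, w ∈ ballInf x y r) →
      ∃ q : (ugraph θ x y t).Walk u v, q.length = p.length := by
  intro u v p
  induction p with
  | nil => exact fun _ => ⟨SimpleGraph.Walk.nil, rfl⟩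
  | @cons a b c hab p ih =>
    intro hsup
    obtain ⟨q, hq⟩ := ih (fun w hw => hsup w (by simp [hw]))
    have ha' : a ∈ ballInf x y r := hsup a (by simp)
    have hadj : (ugraph θ x y t).Adj a b := by
      rw [ugraph, SimpleGraph.fromRel_adj]
      rw [ugraphInf, SimpleGraph.fromRel_adj] at hab
      refine ⟨hab.1, ?_⟩
      have hb' : b ∈ ballInf x y r := hsup b (by simp)
      rcases hab.2 with ⟨k, hk1, hp | hp⟩ | ⟨k, hk1, hp | hp⟩ <;>
        simp only [Prod.mk.injEq] at hp
      · obtain ⟨rfl, rfl⟩ := hp; exact Or.inl ⟨a, hk1, hT a ha', Or.inl rfl⟩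
      · obtain ⟨rfl, rfl⟩ := hp; exact Or.inl ⟨a, hk1, hT a ha', Or.inr rfl⟩
      · obtain ⟨rfl, rfl⟩ := hp; exact Or.inr ⟨b, hk1, hT b hb', Or.inl rfl⟩
      · obtain ⟨rfl, rfl⟩ := hp; exact Or.inr ⟨b, hk1, hT b hb', Or.inr rfl⟩
    exact ⟨SimpleGraph.Walk.cons hadj q, by simp [hq]⟩

lemma det_ballEqInf (θ e x y : ℕ → ℕ) (B C : ℕ)
    (H1 : ∀ n, 1 ≤ n → θ n ≤ B) (H2 : ∀ n, 1 ≤ n → e n ≤ C)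
    (H3 : Valid θ e x y) :
    ∀ r, ∃ T, ∀ t, T ≤ t → ballEqInf θ x y t r := by
  intro r
  have hfin : (ballInf x y r).Finite := ballInf_finite B C H1 H2 H3 r
  refine ⟨(hfin.toFinset.sup (fun k => k + θ k)) + 1, fun t ht => ?_⟩
  have hT : ∀ k ∈ ballInf x y r, k + θ k < t := by
    intro k hk
    have : k + θ k ≤ hfin.toFinset.sup (fun k => k + θ k) :=
      Finset.le_sup (f := fun k => k + θ k) (hfin.mem_toFinset.mpr hk)
    omega
  have hset : ball θ x y t r = ballInf x y r := by
    ext v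
    constructor
    · rintro ⟨hv, hreach, hdist⟩
      refine ⟨hreach.mono (ugraph_le θ x y t), ?_⟩
      obtain ⟨p, hp⟩ := hreach.exists_walk_length_eq_dist
      have := SimpleGraph.dist_le (p.mapLe (ugraph_le θ x y t))
      rw [SimpleGraph.Walk.length_map] at this
      omega
    · rintro hv
      have hreach := hv.1
      have hdist := hv.2
      obtain ⟨p, hp⟩ := hreach.exists_walk_length_eq_dist
      have hsup : ∀ w ∈ p.support, w ∈ ballInf x y r := by
        intro w hw
        have h1 : (ugraphInf x y).dist 0 w ≤ (p.takeUntil w hw).length :=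
          SimpleGraph.dist_le _
        have h2 := SimpleGraph.Walk.length_takeUntil_le p hw
        exact ⟨⟨p.takeUntil w hw⟩, by omega⟩
      obtain ⟨q, hq⟩ := lift_walk hT p hsup
      have hVt : v ∈ V θ t := by
        by_cases hv0 : v = 0
        · left; exact hv0
        · right; have := hT v hv; exact ⟨by omega, by omega⟩
      exact ⟨hVt, ⟨q⟩, by have := SimpleGraph.dist_le q; omega⟩
  refine ⟨hset, fun a b ha hb => ?_⟩
  constructor
  · exact fun h => E_subset_Einf θ x y t h
  · rintro ⟨k, hk1, hp | hp⟩ <;> simp only [Prod.mk.injEq] at hp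
    · obtain ⟨rfl, rfl⟩ := hp
      exact ⟨a, hk1, hT a (hset ▸ ha), Or.inl rfl⟩
    · obtain ⟨rfl, rfl⟩ := hp
      exact ⟨a, hk1, hT a (hset ▸ ha), Or.inr rfl⟩

end Deterministic

end IotaDAG

open MeasureTheory ProbabilityTheory IotaDAG
open scoped Classical

/-- Almost surely the sequence `(G(t_i))` is Cauchy for the local
metric `d_*` — i.e. for every radius `r` the rooted `r`-balls eventually stabilize —
and its limit exists and equals the union `⋃ᵢ G(t_i)` — i.e. for every `r` the rooted
`r`-ball of `G(t)` eventually coincides with that of the union. -/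
theorem limit_exists_and_equals_union
    {Ω : Type*} {mΩ : MeasurableSpace Ω}
    (μ : MeasureTheory.Measure Ω) [MeasureTheory.IsProbabilityMeasure μ]
    (M : ℕ) (hM2 : 2 ≤ M)
    (h : ℕ → ℕ) (hpos : 0 < h 1) (hmono : StrictMonoOn h (Set.Icc 1 M))
    (Iε : Finset ℕ) (hIε : Iε.Nonempty) (hεmin : 0 < Iε.min' hIε)
    (pΘ pε : ℕ → ℝ)
    (hpΘ : ∀ k ∈ Finset.Icc 1 M, 0 < pΘ k) (hpΘsum : ∑ k ∈ Finset.Icc 1 M, pΘ k = 1)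
    (hpε : ∀ j ∈ Iε, 0 < pε j) (hpεsum : ∑ j ∈ Iε, pε j = 1)
    (Θ ε X Y : ℕ → Ω → ℕ)
    (hΘm : ∀ n, Measurable (Θ n)) (hεm : ∀ n, Measurable (ε n))
    (hXm : ∀ n, Measurable (X n)) (hYm : ∀ n, Measurable (Y n))
    -- almost surely the realization is a valid trajectory of the model
    (hmodel : ∀ᵐ ω ∂μ,
      (∀ n, 1 ≤ n → (∃ k, 1 ≤ k ∧ k ≤ M ∧ Θ n ω = h k) ∧ ε n ω ∈ Iε) ∧
      Valid (fun m => Θ m ω) (fun m => ε m ω) (fun m => X m ω) (fun m => Y m ω))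
    -- the conditional law of `(Θ_n, ε_n, X_n, Y_n)` given `Σ_{n-1}`:
    -- parents are uniform with replacement on the delayed set of tips
    (hlaw : ∀ n, 1 ≤ n → ∀ k ∈ Finset.Icc 1 M, ∀ j ∈ Iε, ∀ v v' : ℕ,
      ∀ D : Set Ω, MeasurableSet[sigAlg Θ ε X Y (n - 1)] D →
        (μ (D ∩ {ω | Θ n ω = h k ∧ ε n ω = j ∧ X n ω = v ∧ Y n ω = v'})).toReal
          = ∫ ω in D,
              (if v ∈ tips (fun m => Θ m ω) (fun m => X m ω) (fun m => Y m ω) (n - j) ∧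
                  v' ∈ tips (fun m => Θ m ω) (fun m => X m ω) (fun m => Y m ω) (n - j)
                then pΘ k * pε j /
                  (L (fun m => Θ m ω) (fun m => X m ω) (fun m => Y m ω) (n - j) : ℝ) ^ 2
                else 0) ∂μ)
    : ∀ᵐ ω ∂μ,
      (∀ r : ℕ, ∃ T : ℕ, ∀ t t', T ≤ t → T ≤ t' →
        ballEq (fun m => Θ m ω) (fun m => X m ω) (fun m => Y m ω) t t' r) ∧
      (∀ r : ℕ, ∃ T : ℕ, ∀ t, T ≤ t →
        ballEqInf (fun m => Θ m ω) (fun m => X m ω) (fun m => Y m ω) t r) := by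
  filter_upwards [hmodel] with ω hω
  obtain ⟨hω1, hω2⟩ := hω
  have H1 : ∀ n, 1 ≤ n → Θ n ω ≤ h M := by
    intro n hn
    obtain ⟨k, hk1, hkM, hθ⟩ := (hω1 n hn).1
    rw [hθ]
    exact hmono.monotoneOn ⟨hk1, hkM⟩ ⟨by omega, le_rfl⟩ hkM
  have H2 : ∀ n, 1 ≤ n → ε n ω ≤ Iε.max' hIε :=
    fun n hn => Finset.le_max' _ _ (hω1 n hn).2
  have hdet := det_ballEqInf (fun m => Θ m ω) (fun m => ε m ω)
    (fun m => X m ω) (fun m => Y m ω) (h M) (Iε.max' hIε) H1 H2 hω2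
  refine ⟨fun r => ?_, hdet⟩
  obtain ⟨T, hT⟩ := hdet r
  refine ⟨T, fun t t' ht ht' => ?_⟩
  obtain ⟨hs1, he1⟩ := hT t ht
  obtain ⟨hs2, he2⟩ := hT t' ht'
  refine ⟨hs1.trans hs2.symm, fun a b ha hb => ?_⟩
  rw [he1 a b ha hb,
    ← he2 a b (by rw [hs2, ← hs1]; exact ha) (by rw [hs2, ← hs1]; exact hb)]
end
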